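/- Quantitative quasipinning bound in the Borland–Dennis setting: let (N,d) = (3,6) and let c be a self-consistent 3-fermion coefficient vector with non-increasingly ordered natural occupation numbers n_1 ≥ n_2 ≥ … ≥ n_6 satisfying n_3 > n_4. Then |c({1,2,4})|² + |c({1,3,5})|² + |c({2,3,6})|² ≤ D(n)/(n_3 − n_4) + 3·D(n), where D(n) := 2 − (n_1 + n_2 + n_4). -/

import Mathlib

open Finset

noncomputable section

/-- The set of all `N`-element subsets of `{1,…,d}` (modelled as `Fin d`). -/
def configs (d N : ℕ) : Finset (Finset (Fin d)) :=
  Finset.univ.filter fun S => S.card = N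

/-- The sign `ε(k,R) = (−1)^{#{r ∈ R : r < k}}`. -/
def eps {d : ℕ} (k : Fin d) (R : Finset (Fin d)) : ℂ :=
  (-1 : ℂ) ^ (R.filter fun r => r < k).card

/-- The one-particle reduced density matrix of an `N`-fermion coefficient vector `c`. -/
def rho {d : ℕ} (N : ℕ) (c : Finset (Fin d) → ℂ) : Matrix (Fin d) (Fin d) ℂ :=
  Matrix.of fun i j =>
    ∑ S ∈ (configs d N).filter (fun S => i ∈ S ∧ j ∉ S.erase i),
      eps i S * eps j (insert j (S.erase i)) *
        (starRingEnd ℂ) (c (insert j (S.erase i))) * c S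

/-- Normalization `∑_S |c(S)|² = 1` over all `N`-element subsets `S`. -/
def normalized {d : ℕ} (N : ℕ) (c : Finset (Fin d) → ℂ) : Prop :=
  ∑ S ∈ configs d N, ‖c S‖ ^ 2 = 1

/-- Self-consistency: the one-particle reduced density matrix is diagonal. -/
def selfConsistent {d : ℕ} (N : ℕ) (c : Finset (Fin d) → ℂ) : Prop :=
  ∀ i j : Fin d, i ≠ j → rho N c i j = 0

/-- The natural occupation numbers `n_j = ρ(c)_{jj}` (real parts of the diagonal). -/
def occ {d : ℕ} (N : ℕ) (c : Finset (Fin d) → ℂ) (j : Fin d) : ℝ :=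
  (rho N c j j).re

/-- The occupation vector `n_S ∈ {0,1}^d` of a configuration `S`. -/
def occVec {d : ℕ} (S : Finset (Fin d)) (j : Fin d) : ℝ :=
  if j ∈ S then 1 else 0

/-- `lam` is the list of eigenvalues of `ρ(c)` in non-increasing order. -/
def isOrderedSpectrum {d : ℕ} (N : ℕ) (c : Finset (Fin d) → ℂ) (lam : Fin d → ℝ) : Prop :=
  (∀ i j : Fin d, i ≤ j → lam j ≤ lam i) ∧
  ∃ (h : (rho N c).IsHermitian) (σ : Equiv.Perm (Fin d)), ∀ i, lam i = h.eigenvalues (σ i)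

/-- `x ↦ κ₀ + ∑_j κ_j x_j` is a valid generalized Pauli constraint for the setting `(N,d)`. -/
def IsGPC {d : ℕ} (N : ℕ) (κ₀ : ℝ) (κ : Fin d → ℝ) : Prop :=
  ∀ c : Finset (Fin d) → ℂ, normalized N c →
    ∀ lam : Fin d → ℝ, isOrderedSpectrum N c lam →
      0 ≤ κ₀ + ∑ j, κ j * lam j

lemma eps_mul_self {d : ℕ} (k : Fin d) (R : Finset (Fin d)) : eps k R * eps k R = 1 := by
  rw [eps, ← pow_add]
  exact Even.neg_one_pow ⟨_, rfl⟩

lemma abs_eps {d : ℕ} (k : Fin d) (R : Finset (Fin d)) : ‖eps k R‖ = 1 := by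
  rw [eps, norm_pow]
  simp

lemma occ_eq {d N : ℕ} (c : Finset (Fin d) → ℂ) (j : Fin d) :
    occ N c j = ∑ S ∈ (configs d N).filter (fun S => j ∈ S), ‖c S‖ ^ 2 := by
  have h : rho N c j j =
      ((∑ S ∈ (configs d N).filter (fun S => j ∈ S), ‖c S‖ ^ 2 : ℝ) : ℂ) := by
    rw [rho, Matrix.of_apply, Complex.ofReal_sum]
    have hf : (configs d N).filter (fun S => j ∈ S ∧ j ∉ S.erase j) =
        (configs d N).filter (fun S => j ∈ S) := by
      apply Finset.filter_congr; intro S _; simp [Finset.notMem_erase]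
    rw [hf]
    apply Finset.sum_congr rfl
    intro S hS
    rw [Finset.mem_filter] at hS
    rw [Finset.insert_erase hS.2, eps_mul_self, one_mul]
    rw [show (starRingEnd ℂ) (c S) * c S = c S * (starRingEnd ℂ) (c S) from mul_comm _ _,
      Complex.mul_conj, ← Complex.sq_norm]
  rw [occ, h, Complex.ofReal_re]

lemma abs_term (i k : Fin 6) (R R' : Finset (Fin 6)) (z w : ℂ) :
    ‖eps i R * eps k R' * (starRingEnd ℂ) z * w‖
      = ‖z‖ * ‖w‖ := by
  rw [norm_mul, norm_mul, norm_mul, abs_eps, abs_eps, one_mul, one_mul, Complex.norm_conj]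

lemma cs5 (a1 a2 a3 a4 a5 b1 b2 b3 b4 b5 : ℝ) :
    (a1*b1 + a2*b2 + a3*b3 + a4*b4 + a5*b5)^2 ≤
      (a1^2+a2^2+a3^2+a4^2+a5^2) * (b1^2+b2^2+b3^2+b4^2+b5^2) := by
  nlinarith [sq_nonneg (a1*b2 - a2*b1), sq_nonneg (a1*b3 - a3*b1), sq_nonneg (a1*b4 - a4*b1),
    sq_nonneg (a1*b5 - a5*b1), sq_nonneg (a2*b3 - a3*b2), sq_nonneg (a2*b4 - a4*b2),
    sq_nonneg (a2*b5 - a5*b2), sq_nonneg (a3*b4 - a4*b3), sq_nonneg (a3*b5 - a5*b3),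
    sq_nonneg (a4*b5 - a5*b4)]

set_option maxHeartbeats 1000000 in
theorem stmt9 (c : Finset (Fin 6) → ℂ) (hnorm : normalized 3 c) (hsc : selfConsistent 3 c)
    (hord : ∀ i j : Fin 6, i ≤ j → occ 3 c j ≤ occ 3 c i)
    (hgap : occ 3 c 3 < occ 3 c 2) :
    ‖c {0,1,3}‖ ^ 2 + ‖c {0,2,4}‖ ^ 2 + ‖c {1,2,5}‖ ^ 2 ≤
      (2 - (occ 3 c 0 + occ 3 c 1 + occ 3 c 3)) / (occ 3 c 2 - occ 3 c 3) +
        3 * (2 - (occ 3 c 0 + occ 3 c 1 + occ 3 c 3)) := by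
  have nn012 : (0:ℝ) ≤ ‖c {0,1,2}‖ ^ 2 := sq_nonneg _
  have nn013 : (0:ℝ) ≤ ‖c {0,1,3}‖ ^ 2 := sq_nonneg _
  have nn014 : (0:ℝ) ≤ ‖c {0,1,4}‖ ^ 2 := sq_nonneg _
  have nn015 : (0:ℝ) ≤ ‖c {0,1,5}‖ ^ 2 := sq_nonneg _
  have nn023 : (0:ℝ) ≤ ‖c {0,2,3}‖ ^ 2 := sq_nonneg _
  have nn024 : (0:ℝ) ≤ ‖c {0,2,4}‖ ^ 2 := sq_nonneg _
  have nn025 : (0:ℝ) ≤ ‖c {0,2,5}‖ ^ 2 := sq_nonneg _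
  have nn034 : (0:ℝ) ≤ ‖c {0,3,4}‖ ^ 2 := sq_nonneg _
  have nn035 : (0:ℝ) ≤ ‖c {0,3,5}‖ ^ 2 := sq_nonneg _
  have nn045 : (0:ℝ) ≤ ‖c {0,4,5}‖ ^ 2 := sq_nonneg _
  have nn123 : (0:ℝ) ≤ ‖c {1,2,3}‖ ^ 2 := sq_nonneg _
  have nn124 : (0:ℝ) ≤ ‖c {1,2,4}‖ ^ 2 := sq_nonneg _
  have nn125 : (0:ℝ) ≤ ‖c {1,2,5}‖ ^ 2 := sq_nonneg _
  have nn134 : (0:ℝ) ≤ ‖c {1,3,4}‖ ^ 2 := sq_nonneg _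
  have nn135 : (0:ℝ) ≤ ‖c {1,3,5}‖ ^ 2 := sq_nonneg _
  have nn145 : (0:ℝ) ≤ ‖c {1,4,5}‖ ^ 2 := sq_nonneg _
  have nn234 : (0:ℝ) ≤ ‖c {2,3,4}‖ ^ 2 := sq_nonneg _
  have nn235 : (0:ℝ) ≤ ‖c {2,3,5}‖ ^ 2 := sq_nonneg _
  have nn245 : (0:ℝ) ≤ ‖c {2,4,5}‖ ^ 2 := sq_nonneg _
  have nn345 : (0:ℝ) ≤ ‖c {3,4,5}‖ ^ 2 := sq_nonneg _
  have hsetAll : configs 6 3 = ({{0,1,2},{0,1,3},{0,1,4},{0,1,5},{0,2,3},{0,2,4},{0,2,5},{0,3,4},{0,3,5},{0,4,5},{1,2,3},{1,2,4},{1,2,5},{1,3,4},{1,3,5},{1,4,5},{2,3,4},{2,3,5},{2,4,5},{3,4,5}} : Finset (Finset (Fin 6))) := by decide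
  have hN : ‖c {0,1,2}‖ ^ 2 + ‖c {0,1,3}‖ ^ 2 + ‖c {0,1,4}‖ ^ 2 + ‖c {0,1,5}‖ ^ 2 + ‖c {0,2,3}‖ ^ 2 + ‖c {0,2,4}‖ ^ 2 + ‖c {0,2,5}‖ ^ 2 + ‖c {0,3,4}‖ ^ 2 + ‖c {0,3,5}‖ ^ 2 + ‖c {0,4,5}‖ ^ 2 + ‖c {1,2,3}‖ ^ 2 + ‖c {1,2,4}‖ ^ 2 + ‖c {1,2,5}‖ ^ 2 + ‖c {1,3,4}‖ ^ 2 + ‖c {1,3,5}‖ ^ 2 + ‖c {1,4,5}‖ ^ 2 + ‖c {2,3,4}‖ ^ 2 + ‖c {2,3,5}‖ ^ 2 + ‖c {2,4,5}‖ ^ 2 + ‖c {3,4,5}‖ ^ 2 = 1 := by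
    have h := hnorm
    rw [normalized, hsetAll] at h
    rw [Finset.sum_insert (by decide), Finset.sum_insert (by decide), Finset.sum_insert (by decide), Finset.sum_insert (by decide), Finset.sum_insert (by decide), Finset.sum_insert (by decide), Finset.sum_insert (by decide), Finset.sum_insert (by decide), Finset.sum_insert (by decide), Finset.sum_insert (by decide), Finset.sum_insert (by decide), Finset.sum_insert (by decide), Finset.sum_insert (by decide), Finset.sum_insert (by decide), Finset.sum_insert (by decide), Finset.sum_insert (by decide), Finset.sum_insert (by decide), Finset.sum_insert (by decide), Finset.sum_insert (by decide), Finset.sum_singleton] at h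
    linarith [h]
  have hset0 : (configs 6 3).filter (fun S => (0:Fin 6) ∈ S) = ({{0,1,2},{0,1,3},{0,1,4},{0,1,5},{0,2,3},{0,2,4},{0,2,5},{0,3,4},{0,3,5},{0,4,5}} : Finset (Finset (Fin 6))) := by decide
  have h0 : occ 3 c 0 = ‖c {0,1,2}‖ ^ 2 + ‖c {0,1,3}‖ ^ 2 + ‖c {0,1,4}‖ ^ 2 + ‖c {0,1,5}‖ ^ 2 + ‖c {0,2,3}‖ ^ 2 + ‖c {0,2,4}‖ ^ 2 + ‖c {0,2,5}‖ ^ 2 + ‖c {0,3,4}‖ ^ 2 + ‖c {0,3,5}‖ ^ 2 + ‖c {0,4,5}‖ ^ 2 := by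
    rw [occ_eq, hset0]
    rw [Finset.sum_insert (by decide), Finset.sum_insert (by decide), Finset.sum_insert (by decide), Finset.sum_insert (by decide), Finset.sum_insert (by decide), Finset.sum_insert (by decide), Finset.sum_insert (by decide), Finset.sum_insert (by decide), Finset.sum_insert (by decide), Finset.sum_singleton]
    ring
  have hset1 : (configs 6 3).filter (fun S => (1:Fin 6) ∈ S) = ({{0,1,2},{0,1,3},{0,1,4},{0,1,5},{1,2,3},{1,2,4},{1,2,5},{1,3,4},{1,3,5},{1,4,5}} : Finset (Finset (Fin 6))) := by decide
  have h1 : occ 3 c 1 = ‖c {0,1,2}‖ ^ 2 + ‖c {0,1,3}‖ ^ 2 + ‖c {0,1,4}‖ ^ 2 + ‖c {0,1,5}‖ ^ 2 + ‖c {1,2,3}‖ ^ 2 + ‖c {1,2,4}‖ ^ 2 + ‖c {1,2,5}‖ ^ 2 + ‖c {1,3,4}‖ ^ 2 + ‖c {1,3,5}‖ ^ 2 + ‖c {1,4,5}‖ ^ 2 := by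
    rw [occ_eq, hset1]
    rw [Finset.sum_insert (by decide), Finset.sum_insert (by decide), Finset.sum_insert (by decide), Finset.sum_insert (by decide), Finset.sum_insert (by decide), Finset.sum_insert (by decide), Finset.sum_insert (by decide), Finset.sum_insert (by decide), Finset.sum_insert (by decide), Finset.sum_singleton]
    ring
  have hset2 : (configs 6 3).filter (fun S => (2:Fin 6) ∈ S) = ({{0,1,2},{0,2,3},{0,2,4},{0,2,5},{1,2,3},{1,2,4},{1,2,5},{2,3,4},{2,3,5},{2,4,5}} : Finset (Finset (Fin 6))) := by decide
  have h2 : occ 3 c 2 = ‖c {0,1,2}‖ ^ 2 + ‖c {0,2,3}‖ ^ 2 + ‖c {0,2,4}‖ ^ 2 + ‖c {0,2,5}‖ ^ 2 + ‖c {1,2,3}‖ ^ 2 + ‖c {1,2,4}‖ ^ 2 + ‖c {1,2,5}‖ ^ 2 + ‖c {2,3,4}‖ ^ 2 + ‖c {2,3,5}‖ ^ 2 + ‖c {2,4,5}‖ ^ 2 := by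
    rw [occ_eq, hset2]
    rw [Finset.sum_insert (by decide), Finset.sum_insert (by decide), Finset.sum_insert (by decide), Finset.sum_insert (by decide), Finset.sum_insert (by decide), Finset.sum_insert (by decide), Finset.sum_insert (by decide), Finset.sum_insert (by decide), Finset.sum_insert (by decide), Finset.sum_singleton]
    ring
  have hset3 : (configs 6 3).filter (fun S => (3:Fin 6) ∈ S) = ({{0,1,3},{0,2,3},{0,3,4},{0,3,5},{1,2,3},{1,3,4},{1,3,5},{2,3,4},{2,3,5},{3,4,5}} : Finset (Finset (Fin 6))) := by decide
  have h3 : occ 3 c 3 = ‖c {0,1,3}‖ ^ 2 + ‖c {0,2,3}‖ ^ 2 + ‖c {0,3,4}‖ ^ 2 + ‖c {0,3,5}‖ ^ 2 + ‖c {1,2,3}‖ ^ 2 + ‖c {1,3,4}‖ ^ 2 + ‖c {1,3,5}‖ ^ 2 + ‖c {2,3,4}‖ ^ 2 + ‖c {2,3,5}‖ ^ 2 + ‖c {3,4,5}‖ ^ 2 := by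
    rw [occ_eq, hset3]
    rw [Finset.sum_insert (by decide), Finset.sum_insert (by decide), Finset.sum_insert (by decide), Finset.sum_insert (by decide), Finset.sum_insert (by decide), Finset.sum_insert (by decide), Finset.sum_insert (by decide), Finset.sum_insert (by decide), Finset.sum_insert (by decide), Finset.sum_singleton]
    ring
  have hset23 : (configs 6 3).filter (fun S => (2:Fin 6) ∈ S ∧ (3:Fin 6) ∉ S.erase 2) = ({{0,1,2},{0,2,4},{0,2,5},{1,2,4},{1,2,5},{2,4,5}} : Finset (Finset (Fin 6))) := by decide
  have hr := hsc 2 3 (by decide)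
  rw [rho, Matrix.of_apply, hset23] at hr
  rw [Finset.sum_insert (by decide), Finset.sum_insert (by decide), Finset.sum_insert (by decide), Finset.sum_insert (by decide), Finset.sum_insert (by decide), Finset.sum_singleton] at hr
  rw [show (insert (3:Fin 6) (({0,1,2} : Finset (Fin 6)).erase 2)) = ({0,1,3} : Finset (Fin 6)) from by decide] at hr
  rw [show (insert (3:Fin 6) (({0,2,4} : Finset (Fin 6)).erase 2)) = ({0,3,4} : Finset (Fin 6)) from by decide] at hr
  rw [show (insert (3:Fin 6) (({0,2,5} : Finset (Fin 6)).erase 2)) = ({0,3,5} : Finset (Fin 6)) from by decide] at hr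
  rw [show (insert (3:Fin 6) (({1,2,4} : Finset (Fin 6)).erase 2)) = ({1,3,4} : Finset (Fin 6)) from by decide] at hr
  rw [show (insert (3:Fin 6) (({1,2,5} : Finset (Fin 6)).erase 2)) = ({1,3,5} : Finset (Fin 6)) from by decide] at hr
  rw [show (insert (3:Fin 6) (({2,4,5} : Finset (Fin 6)).erase 2)) = ({3,4,5} : Finset (Fin 6)) from by decide] at hr
  have ht1 : eps 2 ({0,1,2} : Finset (Fin 6)) * eps 3 ({0,1,3} : Finset (Fin 6)) * (starRingEnd ℂ) (c {0,1,3}) * c {0,1,2} = -(eps 2 ({0,2,4} : Finset (Fin 6)) * eps 3 ({0,3,4} : Finset (Fin 6)) * (starRingEnd ℂ) (c {0,3,4}) * c {0,2,4} + eps 2 ({0,2,5} : Finset (Fin 6)) * eps 3 ({0,3,5} : Finset (Fin 6)) * (starRingEnd ℂ) (c {0,3,5}) * c {0,2,5} + eps 2 ({1,2,4} : Finset (Fin 6)) * eps 3 ({1,3,4} : Finset (Fin 6)) * (starRingEnd ℂ) (c {1,3,4}) * c {1,2,4} + eps 2 ({1,2,5} : Finset (Fin 6)) * eps 3 ({1,3,5}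 : Finset (Fin 6)) * (starRingEnd ℂ) (c {1,3,5}) * c {1,2,5} + eps 2 ({2,4,5} : Finset (Fin 6)) * eps 3 ({3,4,5} : Finset (Fin 6)) * (starRingEnd ℂ) (c {3,4,5}) * c {2,4,5}) := by linear_combination hr
  have e := congrArg norm ht1
  rw [abs_term, norm_neg] at e
  have b2 : ‖eps 2 ({0,2,4} : Finset (Fin 6)) * eps 3 ({0,3,4} : Finset (Fin 6)) * (starRingEnd ℂ) (c {0,3,4}) * c {0,2,4}‖ = ‖c {0,3,4}‖ * ‖c {0,2,4}‖ := abs_term _ _ _ _ _ _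
  have b3 : ‖eps 2 ({0,2,5} : Finset (Fin 6)) * eps 3 ({0,3,5} : Finset (Fin 6)) * (starRingEnd ℂ) (c {0,3,5}) * c {0,2,5}‖ = ‖c {0,3,5}‖ * ‖c {0,2,5}‖ := abs_term _ _ _ _ _ _
  have b4 : ‖eps 2 ({1,2,4} : Finset (Fin 6)) * eps 3 ({1,3,4} : Finset (Fin 6)) * (starRingEnd ℂ) (c {1,3,4}) * c {1,2,4}‖ = ‖c {1,3,4}‖ * ‖c {1,2,4}‖ := abs_term _ _ _ _ _ _
  have b5 : ‖eps 2 ({1,2,5} : Finset (Fin 6)) * eps 3 ({1,3,5} : Finset (Fin 6)) * (starRingEnd ℂ) (c {1,3,5}) * c {1,2,5}‖ = ‖c {1,3,5}‖ * ‖c {1,2,5}‖ := abs_term _ _ _ _ _ _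
  have b6 : ‖eps 2 ({2,4,5} : Finset (Fin 6)) * eps 3 ({3,4,5} : Finset (Fin 6)) * (starRingEnd ℂ) (c {3,4,5}) * c {2,4,5}‖ = ‖c {3,4,5}‖ * ‖c {2,4,5}‖ := abs_term _ _ _ _ _ _
  have htri : ‖c {0,1,3}‖ * ‖c {0,1,2}‖ ≤ ‖c {0,3,4}‖ * ‖c {0,2,4}‖ + ‖c {0,3,5}‖ * ‖c {0,2,5}‖ + ‖c {1,3,4}‖ * ‖c {1,2,4}‖ + ‖c {1,3,5}‖ * ‖c {1,2,5}‖ + ‖c {3,4,5}‖ * ‖c {2,4,5}‖ := by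
    rw [e]
    linarith [norm_add_le (eps 2 ({0,2,4} : Finset (Fin 6)) * eps 3 ({0,3,4} : Finset (Fin 6)) * (starRingEnd ℂ) (c {0,3,4}) * c {0,2,4} + eps 2 ({0,2,5} : Finset (Fin 6)) * eps 3 ({0,3,5} : Finset (Fin 6)) * (starRingEnd ℂ) (c {0,3,5}) * c {0,2,5} + eps 2 ({1,2,4} : Finset (Fin 6)) * eps 3 ({1,3,4} : Finset (Fin 6)) * (starRingEnd ℂ) (c {1,3,4}) * c {1,2,4} + eps 2 ({1,2,5} : Finset (Fin 6)) * eps 3 ({1,3,5} : Finset (Fin 6)) * (starRingEnd ℂ) (c {1,3,5}) * c {1,2,5}) (eps 2 ({2,4,5} : Finset (Fin 6)) * eps 3 ({3,4,5} : Finset (Fin 6)) * (starRingEnd ℂ) (c {3,4,5}) * c {2,4,5}), norm_add_le (eps 2 ({0,2,4} : Finset (Fin 6)) * eps 3 ({0,3,4} : Finset (Fin 6)) * (starRingEnd ℂ) (c {0,3,4}) * c {0,2,4} + eps 2 ({0,2,5} : Finset (Fin 6)) * eps 3 ({0,3,5} : Finset (Fin 6)) * (starRingEnd ℂ) (c {0,3,5})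 * c {0,2,5} + eps 2 ({1,2,4} : Finset (Fin 6)) * eps 3 ({1,3,4} : Finset (Fin 6)) * (starRingEnd ℂ) (c {1,3,4}) * c {1,2,4}) (eps 2 ({1,2,5} : Finset (Fin 6)) * eps 3 ({1,3,5} : Finset (Fin 6)) * (starRingEnd ℂ) (c {1,3,5}) * c {1,2,5}), norm_add_le (eps 2 ({0,2,4} : Finset (Fin 6)) * eps 3 ({0,3,4} : Finset (Fin 6)) * (starRingEnd ℂ) (c {0,3,4}) * c {0,2,4} + eps 2 ({0,2,5} : Finset (Fin 6)) * eps 3 ({0,3,5} : Finset (Fin 6)) * (starRingEnd ℂ) (c {0,3,5}) * c {0,2,5}) (eps 2 ({1,2,4} : Finset (Fin 6)) * eps 3 ({1,3,4} : Finset (Fin 6)) * (starRingEnd ℂ) (c {1,3,4}) * c {1,2,4}), norm_add_le (eps 2 ({0,2,4} : Finset (Fin 6)) * eps 3 ({0,3,4} : Finset (Fin 6)) * (starRingEnd ℂ) (c {0,3,4}) * c {0,2,4}) (eps 2 ({0,2,5} : Finset (Fin 6)) * eps 3 ({0,3,5} : Finset (Fin 6)) * (starRingEnd ℂ) (c {0,3,5})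 * c {0,2,5}), b2, b3, b4, b5, b6]
  have key := cs5 (‖c {0,3,4}‖) (‖c {0,3,5}‖) (‖c {1,3,4}‖) (‖c {1,3,5}‖) (‖c {3,4,5}‖) (‖c {0,2,4}‖) (‖c {0,2,5}‖) (‖c {1,2,4}‖) (‖c {1,2,5}‖) (‖c {2,4,5}‖)
  have h4 := pow_le_pow_left₀ (mul_nonneg (norm_nonneg _) (norm_nonneg _)) htri 2
  have hcs : ‖c {0,1,3}‖ ^ 2 * ‖c {0,1,2}‖ ^ 2 ≤ (‖c {0,3,4}‖ ^ 2 + ‖c {0,3,5}‖ ^ 2 + ‖c {1,3,4}‖ ^ 2 + ‖c {1,3,5}‖ ^ 2 + ‖c {3,4,5}‖ ^ 2) * (‖c {0,2,4}‖ ^ 2 + ‖c {0,2,5}‖ ^ 2 + ‖c {1,2,4}‖ ^ 2 + ‖c {1,2,5}‖ ^ 2 + ‖c {2,4,5}‖ ^ 2) := by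
    have hq : ‖c {0,1,3}‖ ^ 2 * ‖c {0,1,2}‖ ^ 2 = (‖c {0,1,3}‖ * ‖c {0,1,2}‖) ^ 2 := by ring
    rw [hq]
    refine le_trans h4 (le_trans (le_of_eq (by ring)) (le_trans key (le_of_eq (by ring))))
  set D := 2 - (occ 3 c 0 + occ 3 c 1 + occ 3 c 3) with hD_def
  set g := occ 3 c 2 - occ 3 c 3 with hg_def
  have hg : 0 < g := by rw [hg_def]; linarith [hgap]
  have hgq : g = (‖c {0,1,2}‖ ^ 2 + ‖c {0,2,4}‖ ^ 2 + ‖c {0,2,5}‖ ^ 2 + ‖c {1,2,4}‖ ^ 2 + ‖c {1,2,5}‖ ^ 2 + ‖c {2,4,5}‖ ^ 2) - (‖c {0,1,3}‖ ^ 2 + ‖c {0,3,4}‖ ^ 2 + ‖c {0,3,5}‖ ^ 2 + ‖c {1,3,4}‖ ^ 2 + ‖c {1,3,5}‖ ^ 2 + ‖c {3,4,5}‖ ^ 2) := by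
    rw [hg_def]; linarith [h2, h3]
  have hDq : D = (-1) * ‖c {0,1,3}‖ ^ 2 + ‖c {0,2,4}‖ ^ 2 + ‖c {0,2,5}‖ ^ 2 + ‖c {0,4,5}‖ ^ 2 + ‖c {1,2,4}‖ ^ 2 + ‖c {1,2,5}‖ ^ 2 + ‖c {1,4,5}‖ ^ 2 + ‖c {2,3,4}‖ ^ 2 + ‖c {2,3,5}‖ ^ 2 + 2 * ‖c {2,4,5}‖ ^ 2 + ‖c {3,4,5}‖ ^ 2 := by
    rw [hD_def]; linarith [h0, h1, h3, hN]
  have nnY : (0:ℝ) ≤ ‖c {0,3,4}‖ ^ 2 + ‖c {0,3,5}‖ ^ 2 + ‖c {1,3,4}‖ ^ 2 + ‖c {1,3,5}‖ ^ 2 + ‖c {3,4,5}‖ ^ 2 := by positivity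
  have hi1 : (g - D) + (‖c {0,3,4}‖ ^ 2 + ‖c {0,3,5}‖ ^ 2 + ‖c {1,3,4}‖ ^ 2 + ‖c {1,3,5}‖ ^ 2 + ‖c {3,4,5}‖ ^ 2) ≤ ‖c {0,1,2}‖ ^ 2 := by linarith [hgq, hDq, nn012, nn013, nn014, nn015, nn023, nn024, nn025, nn034, nn035, nn045, nn123, nn124, nn125, nn134, nn135, nn145, nn234, nn235, nn245, nn345]
  have hi2 : ‖c {0,2,4}‖ ^ 2 + ‖c {0,2,5}‖ ^ 2 + ‖c {1,2,4}‖ ^ 2 + ‖c {1,2,5}‖ ^ 2 + ‖c {2,4,5}‖ ^ 2 ≤ D + ‖c {0,1,3}‖ ^ 2 := by linarith [hDq, nn012, nn013, nn014, nn015, nn023, nn024, nn025, nn034, nn035, nn045, nn123, nn124, nn125, nn134, nn135, nn145, nn234, nn235, nn245, nn345]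
  have hii : ‖c {0,1,3}‖ ^ 2 + ‖c {0,2,4}‖ ^ 2 + ‖c {1,2,5}‖ ^ 2 ≤ D + 2 * ‖c {0,1,3}‖ ^ 2 := by linarith [hi2, nn012, nn013, nn014, nn015, nn023, nn024, nn025, nn034, nn035, nn045, nn123, nn124, nn125, nn134, nn135, nn145, nn234, nn235, nn245, nn345]
  have hiii : ‖c {0,1,3}‖ ^ 2 + ‖c {0,2,4}‖ ^ 2 + ‖c {1,2,5}‖ ^ 2 ≤ 1 - 2 * (‖c {0,3,4}‖ ^ 2 + ‖c {0,3,5}‖ ^ 2 + ‖c {1,3,4}‖ ^ 2 + ‖c {1,3,5}‖ ^ 2 + ‖c {3,4,5}‖ ^ 2) - (g - D) := by linarith [hN, hi1, nn012, nn013, nn014, nn015, nn023, nn024, nn025, nn034, nn035, nn045, nn123, nn124, nn125, nn134, nn135, nn145, nn234, nn235, nn245, nn345]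
  rw [div_add' _ _ _ (ne_of_gt hg), le_div_iff₀ hg]
  rcases le_or_gt g D with hcase | hcase
  · have hle1 : ‖c {0,1,3}‖ ^ 2 + ‖c {0,2,4}‖ ^ 2 + ‖c {1,2,5}‖ ^ 2 ≤ 1 := by linarith [hN, nn012, nn013, nn014, nn015, nn023, nn024, nn025, nn034, nn035, nn045, nn123, nn124, nn125, nn134, nn135, nn145, nn234, nn235, nn245, nn345]
    have hD0 : 0 ≤ D := le_trans (le_of_lt hg) hcase
    linarith [mul_le_mul_of_nonneg_right hle1 (le_of_lt hg), mul_nonneg hD0 (le_of_lt hg), hcase]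
  · have e1 : ‖c {0,1,3}‖ ^ 2 * ((g - D) + (‖c {0,3,4}‖ ^ 2 + ‖c {0,3,5}‖ ^ 2 + ‖c {1,3,4}‖ ^ 2 + ‖c {1,3,5}‖ ^ 2 + ‖c {3,4,5}‖ ^ 2)) ≤ ‖c {0,1,3}‖ ^ 2 * ‖c {0,1,2}‖ ^ 2 :=
      mul_le_mul_of_nonneg_left hi1 nn013
    have e2 : (‖c {0,3,4}‖ ^ 2 + ‖c {0,3,5}‖ ^ 2 + ‖c {1,3,4}‖ ^ 2 + ‖c {1,3,5}‖ ^ 2 + ‖c {3,4,5}‖ ^ 2) * (‖c {0,2,4}‖ ^ 2 + ‖c {0,2,5}‖ ^ 2 + ‖c {1,2,4}‖ ^ 2 + ‖c {1,2,5}‖ ^ 2 + ‖c {2,4,5}‖ ^ 2) ≤ (‖c {0,3,4}‖ ^ 2 + ‖c {0,3,5}‖ ^ 2 + ‖c {1,3,4}‖ ^ 2 + ‖c {1,3,5}‖ ^ 2 + ‖c {3,4,5}‖ ^ 2) * (D + ‖c {0,1,3}‖ ^ 2) :=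
      mul_le_mul_of_nonneg_left hi2 nnY
    have hA : ‖c {0,1,3}‖ ^ 2 * (g - D) ≤ D * (‖c {0,3,4}‖ ^ 2 + ‖c {0,3,5}‖ ^ 2 + ‖c {1,3,4}‖ ^ 2 + ‖c {1,3,5}‖ ^ 2 + ‖c {3,4,5}‖ ^ 2) := by linarith [e1, hcs, e2]
    have hD0 : 0 ≤ D := by
      by_contra hneg
      push_neg at hneg
      have h5 : 0 < ‖c {0,1,3}‖ ^ 2 := by linarith [hi2, nn012, nn013, nn014, nn015, nn023, nn024, nn025, nn034, nn035, nn045, nn123, nn124, nn125, nn134, nn135, nn145, nn234, nn235, nn245, nn345]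
      linarith [hA, mul_pos h5 (show (0:ℝ) < g - D by linarith),
        mul_nonneg (show (0:ℝ) ≤ -D by linarith) nnY]
    have m1 : (g - D) * (‖c {0,1,3}‖ ^ 2 + ‖c {0,2,4}‖ ^ 2 + ‖c {1,2,5}‖ ^ 2) ≤ (g - D) * (D + 2 * ‖c {0,1,3}‖ ^ 2) :=
      mul_le_mul_of_nonneg_left hii (by linarith)
    have m2 : D * (‖c {0,1,3}‖ ^ 2 + ‖c {0,2,4}‖ ^ 2 + ‖c {1,2,5}‖ ^ 2) ≤ D * (1 - 2 * (‖c {0,3,4}‖ ^ 2 + ‖c {0,3,5}‖ ^ 2 + ‖c {1,3,4}‖ ^ 2 + ‖c {1,3,5}‖ ^ 2 + ‖c {3,4,5}‖ ^ 2) - (g - D)) :=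
      mul_le_mul_of_nonneg_left hiii hD0
    linarith [m1, m2, hA, mul_nonneg hD0 (le_of_lt hg)]
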